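/- Let S be a cofibrantly generated model category, (C, D) a pair of small categories, c an object of C, and set D_c := {d ∈ D | Hom_C(d, c) ≠ ∅}. Then for X ∈ S^C, X satisfies D-codescent at c if and only if X satisfies D_c-codescent at c. -/

import Mathlib

/-! Preliminaries: basic notions of homotopical algebra (lifting properties,
model structures, transfinite compositions, relative cell complexes, smallness,
cofibrant generation) and the relative model structure `U_S(C,D)` on functor
categories, following Balmer–Matthey, "Codescent theory I". -/

universe w v u u₂ u₃

open CategoryTheory Limits

namespace Codescent

set_option linter.dupNamespace false

section Lifting

variable {M : Type u} [Category.{v} M]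

/-- The class of morphisms having the left lifting property with respect to all
morphisms in `K`. -/
def llp (K : MorphismProperty M) : MorphismProperty M :=
  fun _ _ f => ∀ ⦃X Y : M⦄ (g : X ⟶ Y), K g → HasLiftingProperty f g

/-- The class of morphisms having the right lifting property with respect to all
morphisms in `K`. -/
def rlp (K : MorphismProperty M) : MorphismProperty M :=
  fun _ _ g => ∀ ⦃A B : M⦄ (f : A ⟶ B), K f → HasLiftingProperty f g

/-- Intersection of two classes of morphisms. -/
def inter (P Q : MorphismProperty M) : MorphismProperty M :=
  fun _ _ f => P f ∧ Q f

/-- `f` is a retract of `g` (as objects of the arrow category). -/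
def RetractHom {X Y X' Y' : M} (f : X ⟶ Y) (g : X' ⟶ Y') : Prop :=
  ∃ (i : Arrow.mk f ⟶ Arrow.mk g) (r : Arrow.mk g ⟶ Arrow.mk f), i ≫ r = 𝟙 (Arrow.mk f)

/-- The object `c` is a retract of the object `d`. -/
def IsRetractObj (c d : M) : Prop :=
  ∃ (i : c ⟶ d) (r : d ⟶ c), i ≫ r = 𝟙 c

/-- A functorial factorization of every morphism as a morphism in `L` followed by
a morphism in `R`. -/
structure FunctorialFact (L R : MorphismProperty M) where
  Z : Arrow M ⥤ M
  ι : (Arrow.leftFunc : Arrow M ⥤ M) ⟶ Z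
  π : Z ⟶ (Arrow.rightFunc : Arrow M ⥤ M)
  fac : ∀ f : Arrow M, ι.app f ≫ π.app f = f.hom
  mem_left : ∀ f : Arrow M, L (ι.app f)
  mem_right : ∀ f : Arrow M, R (π.app f)

end Lifting

/-- A (Quillen) model structure on a category `M`: classes of weak equivalences,
cofibrations and fibrations satisfying MC2–MC5 (MC1, completeness and
cocompleteness, is imposed separately as `HasLimits`/`HasColimits`). -/
structure ModelStructure (M : Type u) [Category.{v} M] where
  weq : MorphismProperty M
  cof : MorphismProperty M
  fib : MorphismProperty M
  /-- MC2, two-out-of-three -/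
  weq_comp : ∀ {X Y Z : M} (f : X ⟶ Y) (g : Y ⟶ Z), weq f → weq g → weq (f ≫ g)
  weq_cancel_left : ∀ {X Y Z : M} (f : X ⟶ Y) (g : Y ⟶ Z), weq f → weq (f ≫ g) → weq g
  weq_cancel_right : ∀ {X Y Z : M} (f : X ⟶ Y) (g : Y ⟶ Z), weq g → weq (f ≫ g) → weq f
  /-- MC3, closure under retracts -/
  weq_retract : ∀ {X Y X' Y' : M} (f : X ⟶ Y) (g : X' ⟶ Y'), RetractHom f g → weq g → weq f
  cof_retract : ∀ {X Y X' Y' : M} (f : X ⟶ Y) (g : X' ⟶ Y'), RetractHom f g → cof g → cof f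
  fib_retract : ∀ {X Y X' Y' : M} (f : X ⟶ Y) (g : X' ⟶ Y'), RetractHom f g → fib g → fib f
  /-- MC4, lifting -/
  cof_lift : ∀ {A B X Y : M} (f : A ⟶ B) (g : X ⟶ Y),
    cof f → weq g → fib g → HasLiftingProperty f g
  fib_lift : ∀ {A B X Y : M} (f : A ⟶ B) (g : X ⟶ Y),
    weq f → cof f → fib g → HasLiftingProperty f g
  /-- MC5, functorial factorizations -/
  fact₁ : FunctorialFact (M := M) cof (inter weq fib)
  fact₂ : FunctorialFact (M := M) (inter weq cof) fib

section Transfinite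

/-- A well-ordered type (with bottom element and successors), the index for
transfinite compositions (a "λ-sequence" index). -/
structure WOType : Type (w + 1) where
  carrier : Type w
  [lin : LinearOrder carrier]
  [succ : SuccOrder carrier]
  [bot : OrderBot carrier]
  [wf : WellFoundedLT carrier]

attribute [instance] WOType.lin WOType.succ WOType.bot WOType.wf

variable {M : Type u} [Category.{v} M] {N : Type u₂} [Category.{v} N]

/-- The class of pushouts of morphisms of `K`. -/
def pushoutsOf (K : MorphismProperty M) : MorphismProperty M :=
  fun X Y f => ∃ (A B : M) (g : A ⟶ B) (t : A ⟶ X) (b : B ⟶ Y), K g ∧ IsPushout g t b f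

/-- The inclusion functor of `{i // i < j}` into a preorder `J`. -/
def iioIncl {J : Type w} [Preorder J] (j : J) : {i : J // i < j} ⥤ J where
  obj i := i.1
  map {i i'} h := homOfLE (Subtype.coe_le_coe.mpr (leOfHom h))

/-- The cocone on the restriction of `F : J ⥤ M` to `{i // i < j}` with apex `F.obj j`. -/
def iioCocone {J : Type w} [Preorder J] (F : J ⥤ M) (j : J) : Cocone (iioIncl j ⋙ F) where
  pt := F.obj j
  ι :=
    { app := fun i => F.map (homOfLE i.2.le)
      naturality := fun i i' h => by
        dsimp
        rw [Category.comp_id, ← F.map_comp]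
        rfl }

/-- `F : J ⥤ M` is a (continuous) transfinite sequence all of whose successor
maps lie in the class `P`. -/
structure IsChainOf (P : MorphismProperty M) {J : Type w} [LinearOrder J] [SuccOrder J]
    (F : J ⥤ M) : Prop where
  succ_mem : ∀ j : J, ¬ IsMax j → P (F.map (homOfLE (Order.le_succ j)))
  limit_isColimit : ∀ j : J, Order.IsSuccLimit j → Nonempty (IsColimit (iioCocone F j))

/-- The class of relative `K`-cells: transfinite compositions of pushouts of
morphisms of `K`. -/
def cell (K : MorphismProperty M) : MorphismProperty M :=
  fun X Y f => ∃ (J : WOType.{v}) (F : J.carrier ⥤ M)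
    (_ : IsChainOf (pushoutsOf K) F) (c : Cocone F) (_ : IsColimit c)
    (e : X ≅ F.obj ⊥) (e' : c.pt ≅ Y), f = e.hom ≫ c.ι.app ⊥ ≫ e'.hom

/-- A linear order is `κ`-filtered when it has no top element and every subset of
cardinality at most `κ` is bounded above. -/
def KFiltered (κ : Cardinal.{w}) (J : Type w) [LinearOrder J] : Prop :=
  (∀ j : J, ∃ j' : J, j < j') ∧
    ∀ s : Set J, Cardinal.mk s ≤ κ → ∃ j : J, ∀ i ∈ s, i ≤ j

/-- The object `d` is small relative to the class `K`: for some cardinal `κ`,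
morphisms from `d` into the colimit of any `κ`-filtered well-ordered continuous
sequence with successor maps in `K` factor, essentially uniquely, through some
stage of the sequence. -/
def IsSmallRel (d : M) (K : MorphismProperty M) : Prop :=
  ∃ κ : Cardinal.{v}, ∀ (J : WOType.{v}), KFiltered κ J.carrier →
    ∀ (F : J.carrier ⥤ M), IsChainOf K F →
    ∀ (c : Cocone F), IsColimit c →
      (∀ g : d ⟶ c.pt, ∃ (j : J.carrier) (h : d ⟶ F.obj j), h ≫ c.ι.app j = g) ∧
      (∀ (j j' : J.carrier) (h : d ⟶ F.obj j) (h' : d ⟶ F.obj j'),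
        h ≫ c.ι.app j = h' ≫ c.ι.app j' →
          ∃ (k : J.carrier) (l : j ≤ k) (l' : j' ≤ k),
            h ≫ F.map (homOfLE l) = h' ≫ F.map (homOfLE l'))

/-- The model structure `P` is cofibrantly generated, with set of generating
cofibrations `I` and set of generating trivial cofibrations `J`. -/
structure IsCofGen (P : ModelStructure M) (I J : MorphismProperty M) : Prop where
  small_I : ∀ ⦃X Y : M⦄ (f : X ⟶ Y), I f → IsSmallRel X (cell I)
  small_J : ∀ ⦃X Y : M⦄ (f : X ⟶ Y), J f → IsSmallRel X (cell J)
  fib_eq : P.fib = rlp J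
  trivFib_eq : inter P.weq P.fib = rlp I

/-- A functor preserves pushouts. -/
def PreservesPushouts (G : M ⥤ N) : Prop :=
  ∀ ⦃Z X Y P : M⦄ (f : Z ⟶ X) (g : Z ⟶ Y) (inl : X ⟶ P) (inr : Y ⟶ P),
    IsPushout f g inl inr → IsPushout (G.map f) (G.map g) (G.map inl) (G.map inr)

/-- A functor preserves transfinite compositions: it preserves colimits of
diagrams indexed by well-ordered types. -/
def PreservesTransfiniteCompositions (G : M ⥤ N) : Prop :=
  ∀ (J : Type v) [LinearOrder J] [WellFoundedLT J] (F : J ⥤ M) (c : Cocone F),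
    IsColimit c → Nonempty (IsColimit (G.mapCocone c))

/-- The image `{G(f) | f ∈ K}` of a class of morphisms under a functor. -/
def strictImage (G : M ⥤ N) (K : MorphismProperty M) : MorphismProperty N :=
  fun _ _ g => ∃ (A B : M) (f : A ⟶ B), K f ∧ Arrow.mk (G.map f) = Arrow.mk g

end Transfinite

section CofRep

variable {M : Type u} [Category.{v} M]

/-- The cofibrant replacement of `X` given by the functorial factorization of
`∅ ⟶ X`. -/
noncomputable def cofRep (P : ModelStructure M) [HasInitial M] (X : M) : M :=
  P.fact₁.Z.obj (Arrow.mk (initial.to X))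

/-- The canonical trivial fibration `QX ⟶ X` from the cofibrant replacement. -/
noncomputable def cofRepHom (P : ModelStructure M) [HasInitial M] (X : M) :
    cofRep P X ⟶ X :=
  P.fact₁.π.app (Arrow.mk (initial.to X))

/-- The functor `X ↦ (∅ ⟶ X)` to the arrow category. -/
noncomputable def toArrowInit (M : Type u) [Category.{v} M] [HasInitial M] : M ⥤ Arrow M where
  obj X := Arrow.mk (initial.to X)
  map {X Y} f := Arrow.homMk (u := 𝟙 _) (v := f) (by apply initial.hom_ext)

/-- The cofibrant replacement functor of the model structure `P`. -/
noncomputable def qFunctor (P : ModelStructure M) [HasInitial M] : M ⥤ M :=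
  toArrowInit M ⋙ P.fact₁.Z

end CofRep

section FunctorCat

variable {S : Type u} [Category.{v} S]

/-- The class of morphisms in `S^C` that belong objectwise on `D` to the class `P`;
for `P` the weak equivalences (resp. fibrations) of a model structure these are
the `D`-weak equivalences (resp. the `D`-fibrations). -/
def objProp {C : Type v} [SmallCategory C] (P : MorphismProperty S) (D : Set C) :
    MorphismProperty (C ⥤ S) :=
  fun _ _ η => ∀ d ∈ D, P (η.app d)

/-- Trivial `D`-fibrations in `S^C`. -/
def dTrivFib {C : Type v} [SmallCategory C] (P : ModelStructure S) (D : Set C) :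
    MorphismProperty (C ⥤ S) :=
  inter (objProp P.weq D) (objProp P.fib D)

/-- `D`-cofibrations in `S^C`: the morphisms having the left lifting property with
respect to all trivial `D`-fibrations. -/
def dCof {C : Type v} [SmallCategory C] (P : ModelStructure S) (D : Set C) :
    MorphismProperty (C ⥤ S) :=
  llp (dTrivFib P D)

variable [HasColimits S]

/-- `D`-cofibrant objects of `S^C`. -/
def dCofibrant {C : Type v} [SmallCategory C] (P : ModelStructure S) (D : Set C)
    (X : C ⥤ S) : Prop :=
  dCof P D (initial.to X)

/-- The model structure `U_S(C,D)` on `S^C`: a model structure whose weak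
equivalences are the `D`-weak equivalences, whose fibrations are the
`D`-fibrations and whose cofibrations are the `D`-cofibrations. -/
structure RelStructure (P : ModelStructure S) (C : Type v) [SmallCategory C] (D : Set C) where
  N : ModelStructure (C ⥤ S)
  weq_eq : N.weq = objProp P.weq D
  fib_eq : N.fib = objProp P.fib D
  cof_eq : N.cof = dCof P D

/-- `X` satisfies `D`-codescent at `c`: the cofibrant replacement morphism
`Q_{C,D} X ⟶ X` in `U_S(C,D)` is a weak equivalence at `c`. -/
def CodescentAt {C : Type v} [SmallCategory C] (P : ModelStructure S) {D : Set C}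
    (U : RelStructure P C D) (X : C ⥤ S) (c : C) : Prop :=
  P.weq ((cofRepHom U.N X).app c)

/-- `X` satisfies `D`-codescent: the cofibrant replacement morphism
`Q_{C,D} X ⟶ X` is a `C`-weak equivalence. -/
def Codescent {C : Type v} [SmallCategory C] (P : ModelStructure S) {D : Set C}
    (U : RelStructure P C D) (X : C ⥤ S) : Prop :=
  ∀ c : C, CodescentAt P U X c

/-- The coproduct property for weak equivalences. -/
def CoproductProperty (P : ModelStructure S) : Prop :=
  ∀ (ι : Type v) (X Y : ι → S) (f : ∀ i, X i ⟶ Y i),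
    (∀ i, P.weq (f i)) ↔ P.weq (Limits.Sigma.map f)

end FunctorCat

section Pairs

variable {A : Type v} [SmallCategory A] {C : Type v} [SmallCategory C]

/-- Two subsets of objects are retract equivalent. -/
def RetractEquiv (D D' : Set C) : Prop :=
  (∀ d ∈ D, ∃ d' ∈ D', IsRetractObj d d') ∧ (∀ d' ∈ D', ∃ d ∈ D, IsRetractObj d' d)

/-- `Φ : (A,B) ⟶ (C,D)` is left glossy. -/
def LeftGlossy (Φ : A ⥤ C) (B : Set A) : Prop :=
  ∀ b ∈ B, ∃ (ι : Type v) (tgt : ι → A) (β : ∀ i, Φ.obj b ⟶ Φ.obj (tgt i)),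
    (∀ i, tgt i ∈ B) ∧
      ∀ (a : A) (α : Φ.obj b ⟶ Φ.obj a),
        ∃! p : (i : ι) × (tgt i ⟶ a), β p.1 ≫ Φ.map p.2 = α

/-- `Φ : (A,B) ⟶ (C,D)` is right glossy. -/
def RightGlossy (Φ : A ⥤ C) (B : Set A) : Prop :=
  ∀ b ∈ B, ∃ (ι : Type v) (src : ι → A) (β : ∀ j, Φ.obj (src j) ⟶ Φ.obj b),
    (∀ j, src j ∈ B) ∧
      ∀ (a : A) (α : Φ.obj a ⟶ Φ.obj b),
        ∃! p : (j : ι) × (a ⟶ src j), Φ.map p.2 ≫ β p.1 = α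

/-- A subset of objects is left absorbant: the source of any morphism whose
target lies in the subset also lies in the subset. -/
def LeftAbsorbant (D : Set C) : Prop :=
  ∀ ⦃c c' : C⦄, (c ⟶ c') → c' ∈ D → c ∈ D

end Pairs

end Codescent
open Codescent

/-! Let `E` be the full subcategory on `D_c ∪ {c}` with inclusion `ι`. Restriction to `E`
followed by `Ran_ι` turns trivial `D_c`-fibrations into trivial `D`-fibrations (an object of
`D \ D_c` maps to no object of `E`, so `Ran_ι` is terminal there); by adjunction, restricting the
`D`-cofibrant replacement `Q_D X` to `E` and applying `Lan_ι` gives a `D_c`-cofibrant `Z`, with a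
counit `Z ⟶ Q_D X` invertible on `E`. Lifting it against `Q_{D_c} X ⟶ X` gives a
`D_c`-weak equivalence `Z ⟶ Q_{D_c} X` between `D_c`-cofibrant objects. Evaluation at `c` has a
right adjoint preserving fibrations, so it sends `D_c`-trivial cofibrations to weak equivalences,
and Ken Brown's lemma makes `Z ⟶ Q_{D_c} X` a weak equivalence at `c`. Two-out-of-three at `c`
concludes. -/

namespace Codescent

section LiftingProperties

variable {M : Type*} [Category M]

lemma retractHom_of_retractArrow {X Y X' Y' : M} {f : X ⟶ Y} {g : X' ⟶ Y'}
    (h : RetractArrow f g) : RetractHom f g :=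
  ⟨h.i, h.r, h.retract⟩

instance inter_isStableUnderRetracts (P Q : MorphismProperty M) [P.IsStableUnderRetracts]
    [Q.IsStableUnderRetracts] : (inter P Q).IsStableUnderRetracts :=
  ⟨fun h hg => ⟨MorphismProperty.of_retract h hg.1, MorphismProperty.of_retract h hg.2⟩⟩

lemma FunctorialFact.hasFactorization {L R : MorphismProperty M} (F : FunctorialFact L R) :
    L.HasFactorization R :=
  ⟨fun f => ⟨⟨_, F.ι.app (Arrow.mk f), F.π.app (Arrow.mk f), F.fac _, F.mem_left _,
    F.mem_right _⟩⟩⟩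

lemma llp_map_of_adjunction {M' : Type*} [Category M'] {L : M ⥤ M'}
    {R : M' ⥤ M} (adj : L ⊣ R) {K : MorphismProperty M} {K' : MorphismProperty M'}
    (hR : ∀ ⦃X Y : M'⦄ (p : X ⟶ Y), K' p → K (R.map p)) {A B : M} {i : A ⟶ B}
    (hi : K.llp i) : K'.llp (L.map i) :=
  fun _ _ p hp => (adj.hasLiftingProperty_iff i p).2 (hi _ (hR p hp))

end LiftingProperties

namespace ModelStructure

variable {M : Type*} [Category M] (P : ModelStructure M)

instance weq_isStableUnderRetracts : P.weq.IsStableUnderRetracts :=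
  ⟨fun h => P.weq_retract _ _ (retractHom_of_retractArrow h)⟩

instance cof_isStableUnderRetracts : P.cof.IsStableUnderRetracts :=
  ⟨fun h => P.cof_retract _ _ (retractHom_of_retractArrow h)⟩

instance fib_isStableUnderRetracts : P.fib.IsStableUnderRetracts :=
  ⟨fun h => P.fib_retract _ _ (retractHom_of_retractArrow h)⟩

instance hasFactorization_cof_trivFib : P.cof.HasFactorization (inter P.weq P.fib) :=
  P.fact₁.hasFactorization

instance hasFactorization_trivCof_fib : (inter P.weq P.cof).HasFactorization P.fib :=
  P.fact₂.hasFactorization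

lemma cof_eq_llp : P.cof = (inter P.weq P.fib).llp :=
  (MorphismProperty.llp_eq_of_le_llp_of_hasFactorization_of_isStableUnderRetracts
    fun _ _ i hi _ _ p hp => P.cof_lift i p hi hp.1 hp.2).symm

lemma fib_eq_rlp : P.fib = (inter P.weq P.cof).rlp :=
  (MorphismProperty.rlp_eq_of_le_rlp_of_hasFactorization_of_isStableUnderRetracts
    fun _ _ p hp _ _ i hi => P.fib_lift i p hi.1 hi.2 hp).symm

lemma trivCof_eq_llp : inter P.weq P.cof = P.fib.llp :=
  (MorphismProperty.llp_eq_of_le_llp_of_hasFactorization_of_isStableUnderRetracts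
    fun _ _ i hi _ _ p hp => P.fib_lift i p hi.1 hi.2 hp).symm

instance weq_containsIdentities : P.weq.ContainsIdentities :=
  ⟨fun X => (P.trivCof_eq_llp ▸ P.fib.llp.id_mem X).1⟩

instance fib_containsIdentities : P.fib.ContainsIdentities :=
  ⟨fun X => P.fib_eq_rlp ▸ (inter P.weq P.cof).rlp.id_mem X⟩

instance cof_isMultiplicative : P.cof.IsMultiplicative :=
  P.cof_eq_llp ▸ inferInstance

instance cof_isStableUnderCobaseChange : P.cof.IsStableUnderCobaseChange :=
  P.cof_eq_llp ▸ inferInstance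

instance fib_isStableUnderProductsOfShape (J : Type*) : P.fib.IsStableUnderProductsOfShape J :=
  P.fib_eq_rlp ▸ inferInstance

lemma fib_pi_map {J : Type*} {X Y : J → M} (f : ∀ j, X j ⟶ Y j)
    (hf : ∀ j, P.fib (f j)) [HasProduct X] [HasProduct Y] : P.fib (Limits.Pi.map f) :=
  MorphismProperty.limMap _ fun j => hf j.as

lemma weq_iff_of_fac {X X₁ X₂ Y : M} {f₁ : X ⟶ X₁} {f₂ : X ⟶ X₂} {g₁ : X₁ ⟶ Y} {g₂ : X₂ ⟶ Y}
    (h : f₁ ≫ g₁ = f₂ ≫ g₂) (hf₁ : P.weq f₁) (hf₂ : P.weq f₂) : P.weq g₁ ↔ P.weq g₂ :=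
  ⟨fun hg₁ => P.weq_cancel_left f₂ g₂ hf₂ (h ▸ P.weq_comp f₁ g₁ hf₁ hg₁),
    fun hg₂ => P.weq_cancel_left f₁ g₁ hf₁ (h ▸ P.weq_comp f₂ g₂ hf₂ hg₂)⟩

/-- Ken Brown's lemma. -/
lemma weq_map_of_weq_of_cofibrant {M' : Type*} [Category M'] (P' : ModelStructure M')
    [HasInitial M] [HasBinaryCoproducts M] (F : M ⥤ M')
    (hF : ∀ ⦃X Y : M⦄ (j : X ⟶ Y), P.weq j → P.cof j → P'.weq (F.map j))
    {A B : M} (k : A ⟶ B) (hA : P.cof (initial.to A)) (hB : P.cof (initial.to B))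
    (hk : P.weq k) : P'.weq (F.map k) := by
  -- `k` and `𝟙 B` factor through the same trivial fibration `h.p` via trivial cofibrations.
  let h := MorphismProperty.factorizationData P.cof (inter P.weq P.fib) (coprod.desc k (𝟙 B))
  have hpo : IsPushout (initial.to A) (initial.to B) coprod.inl coprod.inr :=
    IsPushout.of_hasBinaryCoproduct' A B
  have hj : (coprod.inl ≫ h.i) ≫ h.p = k := by rw [Category.assoc, h.fac, coprod.inl_desc]
  have hs : (coprod.inr ≫ h.i) ≫ h.p = 𝟙 B := by rw [Category.assoc, h.fac, coprod.inr_desc]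
  have hj_cof : P.cof (coprod.inl ≫ h.i) :=
    P.cof.comp_mem _ _ (MorphismProperty.of_isPushout hpo hB) h.hi
  have hs_cof : P.cof (coprod.inr ≫ h.i) :=
    P.cof.comp_mem _ _ (MorphismProperty.of_isPushout hpo.flip hA) h.hi
  have hj_weq : P.weq (coprod.inl ≫ h.i) := P.weq_cancel_right _ _ h.hp.1 (by rwa [hj])
  have hs_weq : P.weq (coprod.inr ≫ h.i) :=
    P.weq_cancel_right _ _ h.hp.1 (by rw [hs]; exact P.weq.id_mem B)
  have hp : P'.weq (F.map h.p) := by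
    refine P'.weq_cancel_left _ _ (hF _ hs_weq hs_cof) ?_
    rw [← F.map_comp, hs, F.map_id]
    exact P'.weq.id_mem _
  rw [← hj, F.map_comp]
  exact P'.weq_comp _ _ (hF _ hj_weq hj_cof) hp

section CofibrantReplacement

variable [HasInitial M] (X : M)

lemma cofRepHom_mem : inter P.weq P.fib (cofRepHom P X) :=
  P.fact₁.mem_right _

lemma cof_initial_to_cofRep : P.cof (initial.to (cofRep P X)) := by
  have : initial.to (cofRep P X) = P.fact₁.ι.app (Arrow.mk (initial.to X)) := initial.hom_ext _ _
  rw [this]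
  exact P.fact₁.mem_left _

end CofibrantReplacement

end ModelStructure

section FunctorCategory

variable {S : Type u} [Category.{v} S] {C : Type v} [SmallCategory C] {P : ModelStructure S}
  {D : Set C}

namespace RelStructure

variable (U : RelStructure P C D) (c : C)

lemma weq_iff {X Y : C ⥤ S} (f : X ⟶ Y) : U.N.weq f ↔ ∀ d ∈ D, P.weq (f.app d) := by
  rw [U.weq_eq]; rfl

variable [HasLimits S]

lemma fib_evaluationRightAdjoint_map {A B : S} {p : A ⟶ B} (hp : P.fib p) :
    U.N.fib ((evaluationRightAdjoint S c).map p) := by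
  rw [U.fib_eq]
  intro x _
  have : ((evaluationRightAdjoint S c).map p).app x = Limits.Pi.map fun _ => p := by
    apply Pi.hom_ext
    intro b
    erw [Pi.lift_π]
  rw [this]
  exact P.fib_pi_map _ fun _ => hp

lemma weq_app_of_trivCof {X Y : C ⥤ S} {j : X ⟶ Y} (hw : U.N.weq j) (hc : U.N.cof j) :
    P.weq (j.app c) := by
  have : P.fib.llp (((evaluation C S).obj c).map j) :=
    llp_map_of_adjunction (evaluationAdjunctionLeft S c)
      (fun _ _ _ hp => U.fib_evaluationRightAdjoint_map c hp) (U.N.trivCof_eq_llp ▸ ⟨hw, hc⟩)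
  exact (P.trivCof_eq_llp ▸ this).1

lemma weq_app_of_weq_of_cofibrant [HasColimits S] {A B : C ⥤ S} (k : A ⟶ B)
    (hA : U.N.cof (initial.to A)) (hB : U.N.cof (initial.to B)) (hk : U.N.weq k) :
    P.weq (k.app c) :=
  U.N.weq_map_of_weq_of_cofibrant P ((evaluation C S).obj c)
    (fun _ _ _ hw hc => U.weq_app_of_trivCof c hw hc) k hA hB hk

end RelStructure

section KanExtension

variable {E : Type v} [SmallCategory E] (ι : E ⥤ C)

noncomputable def lanRestrictAdjunction [HasLimits S] [HasColimits S] :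
    ((Functor.whiskeringLeft E C S).obj ι ⋙ ι.lan) ⊣
      ((Functor.whiskeringLeft E C S).obj ι ⋙ ι.ran) :=
  (ι.ranAdjunction S).comp (ι.lanAdjunction S)

lemma isIso_lanAdjunction_counit_app_obj [HasColimits S] [ι.Full] [ι.Faithful] (Z : C ⥤ S)
    (e : E) : IsIso (((ι.lanAdjunction S).counit.app Z).app (ι.obj e)) := by
  have : IsIso ((ι.lanUnit.app (ι ⋙ Z)).app e ≫
      ((ι.lanAdjunction S).counit.app Z).app (ι.obj e)) := by
    rw [ι.lanUnit_app_app_lanAdjunction_counit_app_app Z e]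
    infer_instance
  exact IsIso.of_isIso_comp_left ((ι.lanUnit.app (ι ⋙ Z)).app e) _

variable [HasLimits S]

noncomputable def ranMapAppObjArrowIso [ι.Full] [ι.Faithful] {F G : E ⥤ S} (τ : F ⟶ G)
    (e : E) : Arrow.mk ((ι.ran.map τ).app (ι.obj e)) ≅ Arrow.mk (τ.app e) :=
  Arrow.isoMk (asIso ((ι.ranCounit.app F).app e)) (asIso ((ι.ranCounit.app G).app e))
    (by simpa using (congr_app (ι.ranCounit.naturality τ) e).symm)

noncomputable def isTerminalRanObjObj {d : C} [IsEmpty (StructuredArrow d ι)] (F : E ⥤ S) :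
    IsTerminal ((ι.ran.obj F).obj d) :=
  (isLimitEquivIsTerminalOfIsEmpty S (limit.cone _) (limit.isLimit _)).ofIso
    (ι.ranObjObjIsoLimit F d).symm

lemma isIso_ran_map_app_of_isEmpty {d : C} [IsEmpty (StructuredArrow d ι)] {F G : E ⥤ S}
    (τ : F ⟶ G) : IsIso ((ι.ran.map τ).app d) :=
  ⟨(isTerminalRanObjObj ι F).from _, (isTerminalRanObjObj ι F).hom_ext _ _,
    (isTerminalRanObjObj ι G).hom_ext _ _⟩

variable [ι.Full] [ι.Faithful] {D' : Set C} (hD' : ∀ d ∈ D', ∃ e, ι.obj e = d)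
  (hD : ∀ d ∈ D, d ∉ D' → IsEmpty (StructuredArrow d ι))
include hD' hD

lemma ran_map_whiskerLeft_mem_dTrivFib {G H : C ⥤ S} {g : G ⟶ H} (hg : dTrivFib P D' g) :
    dTrivFib P D (ι.ran.map (Functor.whiskerLeft ι g)) := by
  suffices ∀ d ∈ D, inter P.weq P.fib ((ι.ran.map (Functor.whiskerLeft ι g)).app d) from
    ⟨fun d hd => (this d hd).1, fun d hd => (this d hd).2⟩
  intro d hd
  by_cases hdD' : d ∈ D'
  · obtain ⟨e, rfl⟩ := hD' d hdD'
    exact ((inter P.weq P.fib).arrow_mk_iso_iff (ranMapAppObjArrowIso ι _ e)).2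
      ⟨hg.1 _ hdD', hg.2 _ hdD'⟩
  · have := hD d hd hdD'
    have := isIso_ran_map_app_of_isEmpty (d := d) ι (Functor.whiskerLeft ι g)
    exact ⟨P.weq.of_isIso _, P.fib.of_isIso _⟩

lemma dCof_initial_to_lan [HasColimits S] {Z : C ⥤ S} (hZ : dCof P D (initial.to Z)) :
    dCof P D' (initial.to (ι.lan.obj (ι ⋙ Z))) := by
  let L := (Functor.whiskeringLeft E C S).obj ι ⋙ ι.lan
  have h : (dTrivFib P D').llp (L.map (initial.to Z)) :=
    llp_map_of_adjunction (lanRestrictAdjunction ι)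
      (fun _ _ _ hp => ran_map_whiskerLeft_mem_dTrivFib ι hD' hD hp) hZ
  have := (lanRestrictAdjunction (S := S) ι).leftAdjoint_preservesColimits
  have hL : IsInitial (L.obj (⊥_ _)) := IsInitial.isInitialObj L _ initialIsInitial
  exact ((dTrivFib P D').llp.arrow_mk_iso_iff
    (Arrow.isoMk (hL.uniqueUpToIso initialIsInitial) (Iso.refl _) (hL.hom_ext _ _))).1 h

end KanExtension

def pruning (D : Set C) (c : C) : ObjectProperty C :=
  fun x => (x ∈ D ∧ Nonempty (x ⟶ c)) ∨ x = c

lemma isEmpty_structuredArrow_pruning_ι {c d : C} (hd : d ∈ D)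
    (hdc : d ∉ {d | d ∈ D ∧ Nonempty (d ⟶ c)}) :
    IsEmpty (StructuredArrow d (pruning D c).ι) := by
  refine ⟨fun f => hdc ⟨hd, ?_⟩⟩
  rcases f.right.property with h | h
  · exact ⟨f.hom ≫ h.2.some⟩
  · exact ⟨f.hom ≫ eqToHom h⟩

lemma dCof_initial_to_lan_pruning [HasLimits S] [HasColimits S] {c : C} {Z : C ⥤ S}
    (hZ : dCof P D (initial.to Z)) :
    dCof P {d | d ∈ D ∧ Nonempty (d ⟶ c)}
      (initial.to ((pruning D c).ι.lan.obj ((pruning D c).ι ⋙ Z))) :=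
  dCof_initial_to_lan _ (fun d hd => ⟨⟨d, .inl hd⟩, rfl⟩)
    (fun _ hd hdc => isEmpty_structuredArrow_pruning_ι hd hdc) hZ

end FunctorCategory

end Codescent

theorem statement_16_general {S : Type u} [Category.{v} S] [HasLimits S] [HasColimits S]
    (P : ModelStructure S)
    {C : Type v} [SmallCategory C] (D : Set C) (c : C)
    (U1 : RelStructure P C D)
    (U2 : RelStructure P C {d | d ∈ D ∧ Nonempty (d ⟶ c)})
    (X : C ⥤ S) :
    CodescentAt P U1 X c ↔ CodescentAt P U2 X c := by
  let ι := (pruning D c).ι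
  let Z := ι.lan.obj (ι ⋙ cofRep U1.N X)
  let ε : Z ⟶ cofRep U1.N X := (ι.lanAdjunction S).counit.app _
  have hε (x : C) (hx : pruning D c x) : IsIso (ε.app x) :=
    isIso_lanAdjunction_counit_app_obj ι _ ⟨x, hx⟩
  have hZ : U2.N.cof (initial.to Z) :=
    U2.cof_eq ▸ dCof_initial_to_lan_pruning (U1.cof_eq ▸ U1.N.cof_initial_to_cofRep X)
  have hπ₁ := (U1.weq_iff _).1 (U1.N.cofRepHom_mem X).1
  obtain ⟨hπ₂, hπ₂_fib⟩ := U2.N.cofRepHom_mem X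
  have hlift := U2.N.cof_lift _ _ hZ hπ₂ hπ₂_fib
  have sq : CommSq (initial.to _) (initial.to Z) (cofRepHom U2.N X) (ε ≫ cofRepHom U1.N X) :=
    ⟨initial.hom_ext _ _⟩
  let k := sq.lift
  have hk (x : C) :
      k.app x ≫ (cofRepHom U2.N X).app x = ε.app x ≫ (cofRepHom U1.N X).app x := by
    rw [← NatTrans.comp_app, ← NatTrans.comp_app, sq.fac_right]
  have hk_weq : U2.N.weq k := by
    refine (U2.weq_iff k).2 fun d hd => P.weq_cancel_right _ _ ((U2.weq_iff _).1 hπ₂ d hd) ?_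
    have := hε d (.inl hd)
    rw [hk]
    exact P.weq_comp _ _ (P.weq.of_isIso _) (hπ₁ d hd.1)
  have := hε c (.inr rfl)
  exact P.weq_iff_of_fac (hk c).symm (P.weq.of_isIso _)
    (U2.weq_app_of_weq_of_cofibrant c k hZ (U2.N.cof_initial_to_cofRep X) hk_weq)

/-- pruning lemma for objects; `D`-codescent at `c` only depends
on `D_c = {d ∈ D | Hom(d,c) ≠ ∅}` (Balmer–Matthey, Theorem 10.4). -/
theorem statement_16 {S : Type u} [Category.{v} S] [HasLimits S] [HasColimits S]
    (P : ModelStructure S) (I J : MorphismProperty S) (hcg : IsCofGen P I J)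
    {C : Type v} [SmallCategory C] (D : Set C) (c : C)
    (U1 : RelStructure P C D)
    (U2 : RelStructure P C {d | d ∈ D ∧ Nonempty (d ⟶ c)})
    (X : C ⥤ S) :
    CodescentAt P U1 X c ↔ CodescentAt P U2 X c :=
  statement_16_general P D c U1 U2 X
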